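/- For the hypersurface {r = 0} ⊂ ℂ³ with r(z₁,z₂,z₃) = Re(z₁) + |z₂|²·Re(z₂² − z₃³) + |z₃|²·Re(z₃²) − Re(z₂²·conj(z₃)), every regular (nonsingular) holomorphic curve γ through 0 satisfies ν(r∘γ)(0) ≤ 4, and the value 4 is attained; hence the regular type of 0 equals 4, while the singular type of 0 is infinite (witnessed by the curve t ↦ (0, t³, t²) lying in {r = 0}). -/

import Mathlib

open Complex Filter Topology

/-- Wirtinger derivative ∂/∂t of a function of one complex variable. -/
noncomputable def wd (f : ℂ → ℂ) : ℂ → ℂ := fun t =>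
  (fderiv ℝ f t 1 - Complex.I * fderiv ℝ f t Complex.I) / 2

/-- Wirtinger derivative ∂/∂t̄ of a function of one complex variable. -/
noncomputable def wdbar (f : ℂ → ℂ) : ℂ → ℂ := fun t =>
  (fderiv ℝ f t 1 + Complex.I * fderiv ℝ f t Complex.I) / 2

/-- D^{a,b}[f] = (∂/∂t)^a (∂/∂t̄)^b f. -/
noncomputable def Dab (a b : ℕ) (f : ℂ → ℂ) : ℂ → ℂ := wd^[a] (wdbar^[b] f)

noncomputable def rDef (z₁ z₂ z₃ : ℂ) : ℝ :=
  z₁.re + ‖z₂‖ ^ 2 * (z₂ ^ 2 - z₃ ^ 3).re + ‖z₃‖ ^ 2 * (z₃ ^ 2).re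
    - (z₂ ^ 2 * (starRingEnd ℂ) z₃).re


/-! Along a holomorphic curve, `r` is the real part of a sum `∑ gᵢ · conj hᵢ` of holomorphic
functions times antiholomorphic ones: `r = Re (z₁ + (z₂³ - z₂ z₃³) z̄₂ + (z₃³ - z₂²) z̄₃)`.
On such sums `∂` and `∂̄` act on the holomorphic and the antiholomorphic factors separately, so
`D^{a,b}` at `0` is `½ ∑ (gᵢ⁽ᵃ⁾ · conj hᵢ⁽ᵇ⁾ + hᵢ⁽ᵃ⁾ · conj gᵢ⁽ᵇ⁾)`, and the Taylor coefficients of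
`γ` decide everything. With `(A, B, C) = γ'(0) ≠ 0`: if `A ≠ 0` then `D^{1,0} = A / 2`; if `BC ≠ 0`
then `D^{2,1} = -B² C̄`; otherwise `D^{3,1} = 3 (B³ B̄ + C³ C̄) ≠ 0`. On the line `t ↦ (0, t, 0)`
only `D^{3,1}` and `D^{1,3}` survive, and `t ↦ (0, t³, t²)` kills both coefficients
`z₂³ - z₂ z₃³` and `z₃³ - z₂²`. -/

open ComplexConjugate

section Wirtinger

variable {f : ℂ → ℂ} {L : ℂ →L[ℝ] ℂ} {t P Q : ℂ}

lemma wd_eq_of_hasFDerivAt (hf : HasFDerivAt f L t) (hL : ∀ v, L v = P * v + Q * conj v) :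
    wd f t = P := by
  simp only [wd, hf.fderiv, hL, conj_I, map_one]
  ring_nf
  rw [I_sq]
  ring

lemma wdbar_eq_of_hasFDerivAt (hf : HasFDerivAt f L t) (hL : ∀ v, L v = P * v + Q * conj v) :
    wdbar f t = Q := by
  simp only [wdbar, hf.fderiv, hL, conj_I, map_one]
  ring_nf
  rw [I_sq]
  ring

lemma Filter.EventuallyEq.wd {F G : ℂ → ℂ} {x : ℂ} (h : F =ᶠ[𝓝 x] G) : wd F =ᶠ[𝓝 x] wd G := by
  filter_upwards [h.fderiv (𝕜 := ℝ)] with t ht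
  simp only [_root_.wd, ht]

lemma Filter.EventuallyEq.wdbar {F G : ℂ → ℂ} {x : ℂ} (h : F =ᶠ[𝓝 x] G) :
    wdbar F =ᶠ[𝓝 x] wdbar G := by
  filter_upwards [h.fderiv (𝕜 := ℝ)] with t ht
  simp only [_root_.wdbar, ht]

lemma exists_hasFDerivAt_mul_conj {g h : ℂ → ℂ} (hg : DifferentiableAt ℂ g t)
    (hh : DifferentiableAt ℂ h t) :
    ∃ L : ℂ →L[ℝ] ℂ, HasFDerivAt (fun s => g s * conj (h s)) L t ∧
      ∀ v, L v = deriv g t * conj (h t) * v + g t * conj (deriv h t) * conj v := by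
  have hg' := hg.hasDerivAt.hasFDerivAt.restrictScalars ℝ
  have hh' := (conjCLE.hasFDerivAt (x := h t)).comp t (hh.hasDerivAt.hasFDerivAt.restrictScalars ℝ)
  refine ⟨_, hg'.mul hh', fun v => ?_⟩
  simp only [add_apply, smul_apply, ContinuousLinearMap.comp_apply,
    ContinuousLinearMap.coe_restrictScalars', ContinuousLinearMap.toSpanSingleton_apply, smul_eq_mul,
    ContinuousLinearEquiv.coe_coe, ContinuousAlgEquiv.coeCLE_apply, conjCAE_apply, map_mul]
  ring

end Wirtinger

lemma AnalyticAt.iteratedDeriv {f : ℂ → ℂ} {x : ℂ} (hf : AnalyticAt ℂ f x) (n : ℕ) :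
    AnalyticAt ℂ (iteratedDeriv n f) x := by
  rw [iteratedDeriv_eq_iterate]
  exact hf.iterated_deriv n

section SumMulConj

variable {ι : Type*} [Fintype ι] {g h : ι → ℂ → ℂ} {x : ℂ}

lemma exists_hasFDerivAt_sum_mul_conj {t : ℂ} (hg : ∀ i, DifferentiableAt ℂ (g i) t)
    (hh : ∀ i, DifferentiableAt ℂ (h i) t) :
    ∃ L : ℂ →L[ℝ] ℂ, HasFDerivAt (fun s => ∑ i, g i s * conj (h i s)) L t ∧
      ∀ v, L v = (∑ i, deriv (g i) t * conj (h i t)) * v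
        + (∑ i, g i t * conj (deriv (h i) t)) * conj v := by
  choose L hL hLv using fun i => exists_hasFDerivAt_mul_conj (hg i) (hh i)
  refine ⟨∑ i, L i, HasFDerivAt.fun_sum fun i _ => hL i, fun v => ?_⟩
  simp [hLv, Finset.sum_mul, Finset.sum_add_distrib]

lemma wd_sum_mul_conj (hg : ∀ i, AnalyticAt ℂ (g i) x) (hh : ∀ i, AnalyticAt ℂ (h i) x) :
    wd (fun s => ∑ i, g i s * conj (h i s)) =ᶠ[𝓝 x]
      fun s => ∑ i, deriv (g i) s * conj (h i s) := by
  filter_upwards [eventually_all.2 fun i => (hg i).eventually_analyticAt,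
    eventually_all.2 fun i => (hh i).eventually_analyticAt] with t hgt hht
  obtain ⟨L, hL, hLv⟩ := exists_hasFDerivAt_sum_mul_conj
    (fun i => (hgt i).differentiableAt) (fun i => (hht i).differentiableAt)
  exact wd_eq_of_hasFDerivAt hL hLv

lemma wdbar_sum_mul_conj (hg : ∀ i, AnalyticAt ℂ (g i) x) (hh : ∀ i, AnalyticAt ℂ (h i) x) :
    wdbar (fun s => ∑ i, g i s * conj (h i s)) =ᶠ[𝓝 x]
      fun s => ∑ i, g i s * conj (deriv (h i) s) := by
  filter_upwards [eventually_all.2 fun i => (hg i).eventually_analyticAt,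
    eventually_all.2 fun i => (hh i).eventually_analyticAt] with t hgt hht
  obtain ⟨L, hL, hLv⟩ := exists_hasFDerivAt_sum_mul_conj
    (fun i => (hgt i).differentiableAt) (fun i => (hht i).differentiableAt)
  exact wdbar_eq_of_hasFDerivAt hL hLv

lemma wd_iterate_eventuallyEq_sum_mul_conj {F : ℂ → ℂ}
    (hF : F =ᶠ[𝓝 x] fun s => ∑ i, g i s * conj (h i s))
    (hg : ∀ i, AnalyticAt ℂ (g i) x) (hh : ∀ i, AnalyticAt ℂ (h i) x) (a : ℕ) :
    wd^[a] F =ᶠ[𝓝 x] fun s => ∑ i, iteratedDeriv a (g i) s * conj (h i s) := by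
  induction a with
  | zero => simpa using hF
  | succ a ih =>
    rw [Function.iterate_succ_apply']
    simp only [iteratedDeriv_succ]
    exact ih.wd.trans (wd_sum_mul_conj (fun i => (hg i).iteratedDeriv a) hh)

lemma wdbar_iterate_eventuallyEq_sum_mul_conj {F : ℂ → ℂ}
    (hF : F =ᶠ[𝓝 x] fun s => ∑ i, g i s * conj (h i s))
    (hg : ∀ i, AnalyticAt ℂ (g i) x) (hh : ∀ i, AnalyticAt ℂ (h i) x) (b : ℕ) :
    wdbar^[b] F =ᶠ[𝓝 x] fun s => ∑ i, g i s * conj (iteratedDeriv b (h i) s) := by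
  induction b with
  | zero => simpa using hF
  | succ b ih =>
    rw [Function.iterate_succ_apply']
    simp only [iteratedDeriv_succ]
    exact ih.wdbar.trans (wdbar_sum_mul_conj hg fun i => (hh i).iteratedDeriv b)

theorem Dab_sum_mul_conj (hg : ∀ i, AnalyticAt ℂ (g i) x) (hh : ∀ i, AnalyticAt ℂ (h i) x)
    (a b : ℕ) :
    Dab a b (fun s => ∑ i, g i s * conj (h i s)) x =
      ∑ i, iteratedDeriv a (g i) x * conj (iteratedDeriv b (h i) x) :=
  (wd_iterate_eventuallyEq_sum_mul_conj
    (wdbar_iterate_eventuallyEq_sum_mul_conj .rfl hg hh b) hg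
    (fun i => (hh i).iteratedDeriv b) a).eq_of_nhds

theorem Dab_re_sum_mul_conj (hg : ∀ i, AnalyticAt ℂ (g i) x) (hh : ∀ i, AnalyticAt ℂ (h i) x)
    (a b : ℕ) :
    Dab a b (fun s => ((∑ i, g i s * conj (h i s)).re : ℂ)) x =
      (∑ i, (iteratedDeriv a (g i) x * conj (iteratedDeriv b (h i) x)
        + iteratedDeriv a (h i) x * conj (iteratedDeriv b (g i) x))) / 2 := by
  -- `Re F = (F + conj F) / 2`, and `conj (g · conj h) = h · conj g`
  have hre : (fun s => ((∑ i, g i s * conj (h i s)).re : ℂ)) = fun s =>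
      ∑ j : ι ⊕ ι, Sum.elim (fun i s => 2⁻¹ * g i s) (fun i s => 2⁻¹ * h i s) j s
        * conj (Sum.elim h g j s) := by
    funext s
    rw [re_eq_add_conj, Fintype.sum_sum_type, ← Finset.sum_add_distrib, map_sum,
      ← Finset.sum_add_distrib, Finset.sum_div]
    refine Finset.sum_congr rfl fun i _ => ?_
    simp only [Sum.elim_inl, Sum.elim_inr, map_mul, conj_conj]
    ring
  have hG : ∀ j, AnalyticAt ℂ (Sum.elim (fun i s => 2⁻¹ * g i s) (fun i s => 2⁻¹ * h i s) j) x := by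
    rintro (i | i)
    exacts [analyticAt_const.mul (hg i), analyticAt_const.mul (hh i)]
  have hH : ∀ j, AnalyticAt ℂ (Sum.elim h g j) x := by
    rintro (i | i)
    exacts [hh i, hg i]
  rw [hre, Dab_sum_mul_conj hG hH, Fintype.sum_sum_type, ← Finset.sum_add_distrib, Finset.sum_div]
  refine Finset.sum_congr rfl fun i _ => ?_
  simp only [Sum.elim_inl, Sum.elim_inr, iteratedDeriv_const_mul_field]
  ring

end SumMulConj

lemma rDef_eq_re (z₁ z₂ z₃ : ℂ) :
    rDef z₁ z₂ z₃ = (z₁ + (z₂ ^ 3 - z₂ * z₃ ^ 3) * conj z₂ + (z₃ ^ 3 - z₂ ^ 2) * conj z₃).re := by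
  rw [rDef, Complex.sq_norm, Complex.sq_norm]
  simp only [normSq_apply, pow_succ, pow_zero, one_mul, add_re, sub_re, mul_re, mul_im, conj_re,
    conj_im, sub_im]
  ring

attribute [local fun_prop] AnalyticAt.contDiffAt

theorem Dab_rDef_comp {u v w : ℂ → ℂ} {x : ℂ} (hu : AnalyticAt ℂ u x) (hv : AnalyticAt ℂ v x)
    (hw : AnalyticAt ℂ w x) (a b : ℕ) :
    Dab a b (fun t => (rDef (u t) (v t) (w t) : ℂ)) x =
      ((if b = 0 then iteratedDeriv a u x else 0) + (if a = 0 then conj (iteratedDeriv b u x) else 0)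
        + iteratedDeriv a (fun t => v t ^ 3 - v t * w t ^ 3) x * conj (iteratedDeriv b v x)
        + iteratedDeriv a v x * conj (iteratedDeriv b (fun t => v t ^ 3 - v t * w t ^ 3) x)
        + iteratedDeriv a (fun t => w t ^ 3 - v t ^ 2) x * conj (iteratedDeriv b w x)
        + iteratedDeriv a w x * conj (iteratedDeriv b (fun t => w t ^ 3 - v t ^ 2) x)) / 2 := by
  have hr : (fun t => (rDef (u t) (v t) (w t) : ℂ)) = fun t =>
      ((∑ i : Fin 3, ![u, fun t => v t ^ 3 - v t * w t ^ 3, fun t => w t ^ 3 - v t ^ 2] i t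
        * conj (![fun _ => 1, v, w] i t)).re : ℂ) := by
    funext t
    simp [rDef_eq_re, Fin.sum_univ_three]
  have hg : ∀ i, AnalyticAt ℂ
      (![u, fun t => v t ^ 3 - v t * w t ^ 3, fun t => w t ^ 3 - v t ^ 2] i) x := by
    intro i
    fin_cases i
    exacts [hu, (hv.pow 3).sub (hv.mul (hw.pow 3)), (hw.pow 3).sub (hv.pow 2)]
  have hh : ∀ i, AnalyticAt ℂ (![fun _ => 1, v, w] i) x := by
    intro i
    fin_cases i
    exacts [analyticAt_const, hv, hw]
  rw [hr, Dab_re_sum_mul_conj hg hh]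
  simp only [Fin.sum_univ_three, Fin.isValue, Matrix.cons_val_zero, Matrix.cons_val_one,
    Matrix.cons_val, iteratedDeriv_const, MonoidWithZeroHom.map_ite_one_zero, mul_ite, mul_one,
    mul_zero, ite_mul, one_mul, zero_mul]
  ring

section Taylor

variable {v w : ℂ → ℂ} {x : ℂ}

lemma iteratedDeriv_cube_sub_mul_cube (hv : AnalyticAt ℂ v x) (hw : AnalyticAt ℂ w x)
    (hv0 : v x = 0) (hw0 : w x = 0) :
    iteratedDeriv 1 (fun t => v t ^ 3 - v t * w t ^ 3) x = 0 ∧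
      iteratedDeriv 2 (fun t => v t ^ 3 - v t * w t ^ 3) x = 0 ∧
      iteratedDeriv 3 (fun t => v t ^ 3 - v t * w t ^ 3) x = 6 * deriv v x ^ 3 := by
  simp_rw [pow_succ, pow_zero, one_mul]
  refine ⟨?_, ?_, ?_⟩ <;>
    simp (discharger := fun_prop) only [iteratedDeriv_fun_sub, iteratedDeriv_fun_mul] <;>
    simp [Finset.sum_range_succ, hv0, hw0]
  ring

lemma iteratedDeriv_cube_sub_sq (hv : AnalyticAt ℂ v x) (hw : AnalyticAt ℂ w x)
    (hv0 : v x = 0) (hw0 : w x = 0) :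
    iteratedDeriv 1 (fun t => w t ^ 3 - v t ^ 2) x = 0 ∧
      iteratedDeriv 2 (fun t => w t ^ 3 - v t ^ 2) x = -2 * deriv v x ^ 2 ∧
      iteratedDeriv 3 (fun t => w t ^ 3 - v t ^ 2) x
        = 6 * deriv w x ^ 3 - 6 * deriv v x * iteratedDeriv 2 v x := by
  simp_rw [pow_succ, pow_zero, one_mul]
  refine ⟨?_, ?_, ?_⟩ <;>
    simp (discharger := fun_prop) only [iteratedDeriv_fun_sub, iteratedDeriv_fun_mul] <;>
    simp [Finset.sum_range_succ, hv0, hw0] <;> ring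

end Taylor

theorem exists_Dab_rDef_comp_ne_zero {u v w : ℂ → ℂ} {x : ℂ} (hu : AnalyticAt ℂ u x)
    (hv : AnalyticAt ℂ v x) (hw : AnalyticAt ℂ w x) (hv0 : v x = 0) (hw0 : w x = 0)
    (hd : (deriv u x, deriv v x, deriv w x) ≠ 0) :
    ∃ a b : ℕ, a + b ≤ 4 ∧ Dab a b (fun t => (rDef (u t) (v t) (w t) : ℂ)) x ≠ 0 := by
  by_cases hA : deriv u x ≠ 0
  · refine ⟨1, 0, by norm_num, ?_⟩
    rw [Dab_rDef_comp hu hv hw]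
    simpa [hv0, hw0] using hA
  have hvw : deriv v x ≠ 0 ∨ deriv w x ≠ 0 := by
    by_contra! h
    exact hd (by simp [not_not.1 hA, h.1, h.2])
  obtain ⟨hP1, hP2, hP3⟩ := iteratedDeriv_cube_sub_mul_cube hv hw hv0 hw0
  obtain ⟨hQ1, hQ2, hQ3⟩ := iteratedDeriv_cube_sub_sq hv hw hv0 hw0
  by_cases hboth : deriv v x ≠ 0 ∧ deriv w x ≠ 0
  · refine ⟨2, 1, by norm_num, ?_⟩
    rw [Dab_rDef_comp hu hv hw, hP1, hP2, hQ1, hQ2]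
    simp [hboth.1, hboth.2]
  · refine ⟨3, 1, by norm_num, ?_⟩
    rw [Dab_rDef_comp hu hv hw, hP1, hP3, hQ1, hQ3]
    rcases hvw with hv' | hw'
    · simp [show deriv w x = 0 by tauto, hv']
    · simp [show deriv v x = 0 by tauto, hw']

theorem Dab_rDef_zero_id_zero (a b : ℕ) :
    Dab a b (fun t => (rDef 0 t 0 : ℂ)) 0 =
      3 * ((if a = 3 ∧ b = 1 then 1 else 0) + (if a = 1 ∧ b = 3 then 1 else 0)) := by
  rw [Dab_rDef_comp (u := fun _ => 0) (v := fun t => t) (w := fun _ => 0) analyticAt_const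
    analyticAt_id analyticAt_const]
  simp only [iteratedDeriv_fun_const_zero, ite_self, map_zero, add_zero, ne_eq,
    OfNat.ofNat_ne_zero, not_false_eq_true, zero_pow, mul_zero, sub_zero, iteratedDeriv_fun_pow_zero,
    Nat.cast_ite, CharP.cast_eq_zero, iteratedDeriv_fun_id_zero, MonoidWithZeroHom.map_ite_one_zero,
    mul_ite, mul_one, zero_add, ite_mul, one_mul, zero_mul, zero_sub, iteratedDeriv_fun_neg,
    Nat.factorial_two, Nat.cast_ofNat, map_neg, mul_neg, neg_zero]
  split_ifs <;> first | omega | norm_num [Nat.factorial, map_ofNat]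

theorem rDef_cusp_eq_zero (t : ℂ) : rDef 0 (t ^ 3) (t ^ 2) = 0 := by
  rw [rDef_eq_re]
  ring_nf
  simp

lemma deriv_eq_triple {γ : ℂ → ℂ × ℂ × ℂ} {x : ℂ} (hγ : DifferentiableAt ℂ γ x) :
    deriv γ x = (deriv (fun t => (γ t).1) x, deriv (fun t => (γ t).2.1) x,
      deriv (fun t => (γ t).2.2) x) :=
  (hγ.fst.hasDerivAt.prodMk (hγ.snd.fst.hasDerivAt.prodMk hγ.snd.snd.hasDerivAt)).deriv

/-- Every regular holomorphic curve through 0 has order of contact ≤ 4 with {r=0}, the value 4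
is attained by a regular curve, and the curve t ↦ (0,t³,t²) lies in {r=0} (so the regular type
of 0 is 4 while the singular type is infinite). -/
theorem stmt4 :
    (∀ γ : ℂ → ℂ × ℂ × ℂ, AnalyticAt ℂ γ 0 → γ 0 = 0 → deriv γ 0 ≠ 0 →
      ∃ a b : ℕ, a + b ≤ 4 ∧
        Dab a b (fun t => ((rDef (γ t).1 (γ t).2.1 (γ t).2.2 : ℝ) : ℂ)) 0 ≠ 0) ∧
    (∃ γ : ℂ → ℂ × ℂ × ℂ, AnalyticAt ℂ γ 0 ∧ γ 0 = 0 ∧ deriv γ 0 ≠ 0 ∧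
      (∀ a b : ℕ, a + b < 4 →
        Dab a b (fun t => ((rDef (γ t).1 (γ t).2.1 (γ t).2.2 : ℝ) : ℂ)) 0 = 0) ∧
      (∃ a b : ℕ, a + b = 4 ∧
        Dab a b (fun t => ((rDef (γ t).1 (γ t).2.1 (γ t).2.2 : ℝ) : ℂ)) 0 ≠ 0)) ∧
    (∀ t : ℂ, rDef 0 (t ^ 3) (t ^ 2) = 0) := by
  refine ⟨fun γ hγ h0 hd => ?_, ⟨fun t => (0, t, 0), by fun_prop, rfl, ?_, ?_, ?_⟩,
    rDef_cusp_eq_zero⟩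
  · rw [deriv_eq_triple hγ.differentiableAt] at hd
    exact exists_Dab_rDef_comp_ne_zero (analyticAt_fst.comp hγ)
      (analyticAt_fst.comp (analyticAt_snd.comp hγ)) (analyticAt_snd.comp (analyticAt_snd.comp hγ))
      (congrArg (·.2.1) h0) (congrArg (·.2.2) h0) hd
  · rw [deriv_eq_triple (by fun_prop)]
    simp
  · intro a b hab
    rw [Dab_rDef_zero_id_zero, if_neg (by omega), if_neg (by omega)]
    norm_num
  · exact ⟨3, 1, rfl, by simp [Dab_rDef_zero_id_zero]⟩
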